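/- arXiv:1402.5111 — 2 statements merged into one kernel-verified Lean document; each statement's English description precedes it below -/
import Mathlib

section
/- Let n be a positive integer and for real c > 1 define heights on [n+1]×[n] by h_c(i,j) = c^{j−i} if j ≥ i, h_c(i,j) = c^{n+j−i} if j < i ≤ n, and h_c(n+1, j) = 1. There exists a real number c₀ > 1 such that for every real c ≥ c₀ the following holds: for all I ⊆ [n+1] and J ⊆ [n] with |I| = |J| and every perfect matching M between I and J with M ∈ ℳ^ext_n, one has ∑_{(i,j)∈M} h_c(i,j) < ∑_{(i,j)∈M'} h_c(i,j) for every perfect matching M' ≠ M between I and J. (Consequently, these heights induce the extended Dyck path triangulation as a regular triangulation.) -/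
/-- `M` is a perfect matching between `I` and `J`: every pair of `M` lies in `I × J`,
and every element of `I` and of `J` occurs in exactly one pair of `M`. -/
def IsPM (I J : Finset ℕ) (M : Finset (ℕ × ℕ)) : Prop :=
  (∀ p ∈ M, p.1 ∈ I ∧ p.2 ∈ J) ∧
  (∀ i ∈ I, ∃! j : ℕ, (i, j) ∈ M) ∧
  (∀ j ∈ J, ∃! i : ℕ, (i, j) ∈ M)

/-- The cyclic shift `σ_ℓ(a) = ((a - 1 + ℓ) mod n) + 1` on `[n] = {1, …, n}`,
extended by fixing `n + 1`. -/
def cycShiftExt (n ℓ a : ℕ) : ℕ := if a = n + 1 then n + 1 else (a - 1 + ℓ) % n + 1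

/-- `M` is extended-nc+wi: non-crossing, and weakly increasing away from `n + 1`. -/
def NCWIext (n : ℕ) (M : Finset (ℕ × ℕ)) : Prop :=
  (∀ p ∈ M, ∀ q ∈ M, p.1 < q.1 → p.2 < q.2) ∧
  (∀ p ∈ M, p.1 ≠ n + 1 → p.1 ≤ p.2)

/-- The family `ℳ^ext_n`: all `ℓ`-shifts (`0 ≤ ℓ < n`) of extended-nc+wi perfect
matchings between subsets of `[n+1]` and of `[n]`. -/
def MemDyckFamilyExt (n : ℕ) (M : Finset (ℕ × ℕ)) : Prop :=
  ∃ ℓ < n, ∃ M₀ : Finset (ℕ × ℕ),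
    (∀ p ∈ M₀, p.1 ∈ Finset.Icc 1 (n + 1) ∧ p.2 ∈ Finset.Icc 1 n) ∧
    IsPM (M₀.image Prod.fst) (M₀.image Prod.snd) M₀ ∧
    NCWIext n M₀ ∧
    M = M₀.image (fun p => (cycShiftExt n ℓ p.1, cycShiftExt n ℓ p.2))

/-- The height of the point `(e_i, e_j)`, `i ∈ [n+1]`, `j ∈ [n]`:
`c^(j-i)` if `j ≥ i`, `c^(n+j-i)` if `j < i ≤ n`, and `1` if `i = n+1`. -/
noncomputable def extHeight (n : ℕ) (c : ℝ) (p : ℕ × ℕ) : ℝ :=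
  if p.1 = n + 1 then 1
  else if p.1 ≤ p.2 then c ^ (p.2 - p.1)
  else c ^ (n + p.2 - p.1)

/- ### Auxiliary lemmas -/

lemma IsPM.snd_unique {I J : Finset ℕ} {M : Finset (ℕ × ℕ)} (h : IsPM I J M)
    {i j j' : ℕ} (h1 : (i, j) ∈ M) (h2 : (i, j') ∈ M) : j = j' := by
  obtain ⟨j₀, _, huniq⟩ := h.2.1 i (h.1 _ h1).1
  rw [huniq j h1, huniq j' h2]

lemma IsPM.fst_unique {I J : Finset ℕ} {M : Finset (ℕ × ℕ)} (h : IsPM I J M)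
    {i i' j : ℕ} (h1 : (i, j) ∈ M) (h2 : (i', j) ∈ M) : i = i' := by
  obtain ⟨i₀, _, huniq⟩ := h.2.2 j (h.1 _ h1).2
  rw [huniq i h1, huniq i' h2]

lemma IsPM.mem_unique {I J : Finset ℕ} {M : Finset (ℕ × ℕ)} (h : IsPM I J M)
    {p q : ℕ × ℕ} (h1 : p ∈ M) (h2 : q ∈ M) (hfst : p.1 = q.1) : p = q := by
  obtain ⟨a, b⟩ := p
  obtain ⟨a', b'⟩ := q
  simp only at hfst
  subst hfst
  exact Prod.ext rfl (h.snd_unique h1 h2)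

lemma IsPM.mem_unique' {I J : Finset ℕ} {M : Finset (ℕ × ℕ)} (h : IsPM I J M)
    {p q : ℕ × ℕ} (h1 : p ∈ M) (h2 : q ∈ M) (hsnd : p.2 = q.2) : p = q := by
  obtain ⟨a, b⟩ := p
  obtain ⟨a', b'⟩ := q
  simp only at hsnd
  subst hsnd
  exact Prod.ext (h.fst_unique h1 h2) rfl

lemma IsPM.image_fst {I J : Finset ℕ} {M : Finset (ℕ × ℕ)} (h : IsPM I J M) :
    M.image Prod.fst = I := by
  ext a
  simp only [Finset.mem_image]
  constructor
  · rintro ⟨p, hp, rfl⟩; exact (h.1 p hp).1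
  · intro ha
    obtain ⟨j, hj, -⟩ := h.2.1 a ha
    exact ⟨(a, j), hj, rfl⟩

lemma IsPM.image_snd {I J : Finset ℕ} {M : Finset (ℕ × ℕ)} (h : IsPM I J M) :
    M.image Prod.snd = J := by
  ext b
  simp only [Finset.mem_image]
  constructor
  · rintro ⟨p, hp, rfl⟩; exact (h.1 p hp).2
  · intro hb
    obtain ⟨i, hi, -⟩ := h.2.2 b hb
    exact ⟨(i, b), hi, rfl⟩

lemma IsPM.card_eq {I J : Finset ℕ} {M : Finset (ℕ × ℕ)} (h : IsPM I J M) :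
    M.card = I.card := by
  conv_rhs => rw [← h.image_fst]
  exact (Finset.card_image_of_injOn fun p hp q hq hpq => h.mem_unique hp hq hpq).symm

namespace Dyck16Aux

/-- The exponent of the height. -/
def eExp (n : ℕ) (p : ℕ × ℕ) : ℕ :=
  if p.1 = n + 1 then 0 else if p.1 ≤ p.2 then p.2 - p.1 else n + p.2 - p.1

lemma extHeight_eq_pow (n : ℕ) (c : ℝ) (p : ℕ × ℕ) :
    extHeight n c p = c ^ eExp n p := by
  unfold extHeight eExp
  split_ifs <;> simp

/-- second projections of the two "difference" parts agree (one inclusion). -/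
lemma sdiff_snd_subset {I J : Finset ℕ} {M M' : Finset (ℕ × ℕ)}
    (h : IsPM I J M) (h' : IsPM I J M') :
    ((M \ M').image Prod.snd) ⊆ ((M' \ M).image Prod.snd) := by
  intro b hb
  simp only [Finset.mem_image, Finset.mem_sdiff] at hb ⊢
  obtain ⟨p, ⟨hpM, hpM'⟩, rfl⟩ := hb
  obtain ⟨i, hi, -⟩ := h'.2.2 p.2 (h.1 p hpM).2
  refine ⟨(i, p.2), ⟨hi, fun hmem => ?_⟩, rfl⟩
  have : p.1 = i := h.fst_unique (by simpa using hpM) hmem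
  apply hpM'
  rw [← this] at hi
  simpa using hi

lemma sdiff_snd_eq {I J : Finset ℕ} {M M' : Finset (ℕ × ℕ)}
    (h : IsPM I J M) (h' : IsPM I J M') :
    ((M \ M').image Prod.snd) = ((M' \ M).image Prod.snd) :=
  le_antisymm (sdiff_snd_subset h h') (sdiff_snd_subset h' h)

lemma sdiff_fst_subset {I J : Finset ℕ} {M M' : Finset (ℕ × ℕ)}
    (h : IsPM I J M) (h' : IsPM I J M') :
    ((M \ M').image Prod.fst) ⊆ ((M' \ M).image Prod.fst) := by
  intro a ha
  simp only [Finset.mem_image, Finset.mem_sdiff] at ha ⊢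
  obtain ⟨p, ⟨hpM, hpM'⟩, rfl⟩ := ha
  obtain ⟨j, hj, -⟩ := h'.2.1 p.1 (h.1 p hpM).1
  refine ⟨(p.1, j), ⟨hj, fun hmem => ?_⟩, rfl⟩
  have : j = p.2 := h.snd_unique hmem (by simpa using hpM)
  rw [this] at hj
  exact hpM' hj

open Classical in
noncomputable def pSnd (M : Finset (ℕ × ℕ)) (i : ℕ) : ℕ :=
  if h : ∃ j, (i, j) ∈ M then h.choose else 0

lemma pSnd_mem {M : Finset (ℕ × ℕ)} {i j : ℕ} (hj : (i, j) ∈ M) : (i, pSnd M i) ∈ M := by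
  have h : ∃ j, (i, j) ∈ M := ⟨j, hj⟩
  simpa [pSnd, h] using h.choose_spec

open Classical in
noncomputable def pFst (M : Finset (ℕ × ℕ)) (j : ℕ) : ℕ :=
  if h : ∃ i, (i, j) ∈ M then h.choose else 0

lemma pFst_mem {M : Finset (ℕ × ℕ)} {i j : ℕ} (hi : (i, j) ∈ M) : (pFst M j, j) ∈ M := by
  have h : ∃ i, (i, j) ∈ M := ⟨i, hi⟩
  simpa [pFst, h] using h.choose_spec

/-- Core inequality: the (unshifted) nc+wi matching has strictly smaller total height
than any other matching between the same `I` and `J`, for `c ≥ n + 2`. -/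
lemma core (n : ℕ) (hn : 0 < n) (c : ℝ) (hc : (n : ℝ) + 2 ≤ c)
    (I J : Finset ℕ) (hI : I ⊆ Finset.Icc 1 (n + 1)) (hJ : J ⊆ Finset.Icc 1 n)
    (M M' : Finset (ℕ × ℕ)) (hPM : IsPM I J M) (hPM' : IsPM I J M')
    (hnc : ∀ p ∈ M, ∀ q ∈ M, p.1 < q.1 → p.2 < q.2)
    (hwi : ∀ p ∈ M, p.1 ≠ n + 1 → p.1 ≤ p.2)
    (hne : M' ≠ M) :
    ∑ p ∈ M, extHeight n c p < ∑ p ∈ M', extHeight n c p := by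
  have hc1 : (1 : ℝ) ≤ c := by
    have : (0 : ℝ) ≤ n := Nat.cast_nonneg n
    linarith
  have hc0 : (0 : ℝ) < c := by linarith
  set N : Finset (ℕ × ℕ) := M \ M' with hN
  set N' : Finset (ℕ × ℕ) := M' \ M with hN'
  have hMco : ∀ p ∈ M, 1 ≤ p.1 ∧ p.1 ≤ n + 1 ∧ 1 ≤ p.2 ∧ p.2 ≤ n := by
    intro p hp
    have h1 := hI (hPM.1 p hp).1
    have h2 := hJ (hPM.1 p hp).2
    simp only [Finset.mem_Icc] at h1 h2
    exact ⟨h1.1, h1.2, h2.1, h2.2⟩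
  have hM'co : ∀ p ∈ M', 1 ≤ p.1 ∧ p.1 ≤ n + 1 ∧ 1 ≤ p.2 ∧ p.2 ≤ n := by
    intro p hp
    have h1 := hI (hPM'.1 p hp).1
    have h2 := hJ (hPM'.1 p hp).2
    simp only [Finset.mem_Icc] at h1 h2
    exact ⟨h1.1, h1.2, h2.1, h2.2⟩
  have hcard : M.card = M'.card := by rw [hPM.card_eq, hPM'.card_eq]
  have hNne : N.Nonempty := by
    rw [hN, Finset.sdiff_nonempty]
    intro hsub
    exact hne (Finset.eq_of_subset_of_card_le hsub hcard.ge).symm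
  have hN'ne : N'.Nonempty := by
    rw [hN', Finset.sdiff_nonempty]
    intro hsub
    exact hne (Finset.eq_of_subset_of_card_le hsub hcard.le)
  -- a pair of N with first coordinate ≤ n
  have hT : ∃ p ∈ N, p.1 ≤ n := by
    by_contra hcon
    push_neg at hcon
    have hallN : ∀ p ∈ N, p.1 = n + 1 := by
      intro p hp
      have h1 := (hMco p (Finset.mem_sdiff.mp hp).1).2.1
      have h2 := hcon p hp
      omega
    obtain ⟨p, hp⟩ := hNne
    have hpsnd : p.2 ∈ (N'.image Prod.snd) := by
      rw [hN', ← sdiff_snd_eq hPM hPM']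
      exact Finset.mem_image_of_mem _ hp
    simp only [Finset.mem_image] at hpsnd
    obtain ⟨q, hq, hq2⟩ := hpsnd
    have hq1 : q.1 = n + 1 := by
      have hqfst : q.1 ∈ (N.image Prod.fst) := by
        rw [hN]
        exact sdiff_fst_subset hPM' hPM (Finset.mem_image_of_mem _ hq)
      simp only [Finset.mem_image] at hqfst
      obtain ⟨r, hr, hr1⟩ := hqfst
      rw [← hr1]
      exact hallN r hr
    have hqp : q = p := Prod.ext (by rw [hq1, hallN p hp]) hq2
    rw [hqp] at hq
    exact (Finset.mem_sdiff.mp hq).2 (Finset.mem_sdiff.mp hp).1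
  obtain ⟨p₁, hp₁N, hp₁n⟩ := hT
  set T : Finset (ℕ × ℕ) := N.filter (fun p => p.1 ≤ n) with hTdef
  have hTne : T.Nonempty := ⟨p₁, Finset.mem_filter.mpr ⟨hp₁N, hp₁n⟩⟩
  obtain ⟨ps, hpsT, hpsmax⟩ := Finset.exists_max_image T (fun p => p.2 - p.1) hTne
  have hpsN : ps ∈ N := (Finset.mem_filter.mp hpsT).1
  have hpsn : ps.1 ≤ n := (Finset.mem_filter.mp hpsT).2
  have hpsM : ps ∈ M := (Finset.mem_sdiff.mp hpsN).1
  have hpsM' : ps ∉ M' := (Finset.mem_sdiff.mp hpsN).2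
  have hco := hMco ps hpsM
  have hiw : ps.1 ≤ ps.2 := hwi ps hpsM (by omega)
  set D := ps.2 - ps.1 with hD
  have hNbound : ∀ q ∈ N, eExp n q ≤ D := by
    intro q hq
    have hqM : q ∈ M := (Finset.mem_sdiff.mp hq).1
    have hqco := hMco q hqM
    by_cases hq1 : q.1 = n + 1
    · simp [eExp, hq1]
    · have hqn : q.1 ≤ n := by omega
      have hle : q.1 ≤ q.2 := hwi q hqM hq1
      have hmax := hpsmax q (Finset.mem_filter.mpr ⟨hq, hqn⟩)
      unfold eExp
      rw [if_neg hq1, if_pos hle]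
      omega
  -- find the witness in N'
  have hwitness : ∃ p ∈ N', D + 1 ≤ eExp n p := by
    have histarI : ps.1 ∈ I := (hPM.1 ps hpsM).1
    obtain ⟨v₀, hv₀, -⟩ := hPM'.2.1 ps.1 histarI
    have hvmem : (ps.1, pSnd M' ps.1) ∈ M' := pSnd_mem hv₀
    set v := pSnd M' ps.1 with hv
    have hvne : v ≠ ps.2 := by
      intro h
      apply hpsM'
      rw [h] at hvmem
      simpa using hvmem
    have hvN' : (ps.1, v) ∈ N' := by
      rw [hN', Finset.mem_sdiff]
      refine ⟨hvmem, fun hmem => ?_⟩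
      exact hvne (hPM.snd_unique hmem (by simpa using hpsM))
    have hvco := hM'co _ hvmem
    rcases lt_or_gt_of_ne hvne with hlt | hgt
    · -- v < ps.2 : pigeonhole
      have key : ∃ p ∈ N', ps.2 ≤ p.2 ∧ p.1 < ps.1 := by
        by_contra hcon
        push_neg at hcon
        have hstrict : ∀ p ∈ N', ps.2 ≤ p.2 → ps.1 < p.1 := by
          intro p hp hwp
          have h1 := hcon p hp hwp
          rcases eq_or_lt_of_le h1 with heq | h
          · exfalso
            have hpM' : p ∈ M' := (Finset.mem_sdiff.mp hp).1
            have hps2 : (ps.1, p.2) ∈ M' := by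
              rw [heq]
              simpa using hpM'
            have : p.2 = v := hPM'.snd_unique hps2 hvmem
            omega
          · exact h
        set A := N'.filter (fun p => ps.2 ≤ p.2) with hA
        set C := N.filter (fun p => ps.2 < p.2) with hCdef
        set C' := N.filter (fun p => ps.2 ≤ p.2) with hC'def
        have hAC : A.card ≤ C.card := by
          apply Finset.card_le_card_of_injOn (fun p => (p.1, pSnd M p.1))
          · intro p hp
            obtain ⟨hpN', hwp⟩ := Finset.mem_filter.mp hp
            have hpM' : p ∈ M' := (Finset.mem_sdiff.mp hpN').1
            have hpnotM : p ∉ M := (Finset.mem_sdiff.mp hpN').2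
            obtain ⟨j, hj, -⟩ := hPM.2.1 p.1 (hPM'.1 p hpM').1
            have hq : (p.1, pSnd M p.1) ∈ M := pSnd_mem hj
            have hlt' : ps.1 < p.1 := hstrict p hpN' hwp
            have h2 : ps.2 < pSnd M p.1 := hnc ps hpsM _ hq hlt'
            refine Finset.mem_filter.mpr ⟨Finset.mem_sdiff.mpr ⟨hq, ?_⟩, h2⟩
            intro hmem
            have hps : pSnd M p.1 = p.2 := hPM'.snd_unique hmem (by simpa using hpM')
            rw [hps] at hq
            apply hpnotM
            simpa using hq
          · intro p hp q hq hpq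
            have hp' : p ∈ M' := (Finset.mem_sdiff.mp (Finset.mem_filter.mp (Finset.mem_coe.mp hp)).1).1
            have hq' : q ∈ M' := (Finset.mem_sdiff.mp (Finset.mem_filter.mp (Finset.mem_coe.mp hq)).1).1
            simp only [Prod.mk.injEq] at hpq
            exact hPM'.mem_unique hp' hq' hpq.1
        have hC'A : C'.card ≤ A.card := by
          apply Finset.card_le_card_of_injOn (fun q => (pFst M' q.2, q.2))
          · intro q hq
            obtain ⟨hqN, hwq⟩ := Finset.mem_filter.mp hq
            have hqM : q ∈ M := (Finset.mem_sdiff.mp hqN).1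
            have hqnotM' : q ∉ M' := (Finset.mem_sdiff.mp hqN).2
            obtain ⟨i, hi, -⟩ := hPM'.2.2 q.2 (hPM.1 q hqM).2
            have hq' : (pFst M' q.2, q.2) ∈ M' := pFst_mem hi
            refine Finset.mem_filter.mpr ⟨Finset.mem_sdiff.mpr ⟨hq', ?_⟩, hwq⟩
            intro hmem
            have hpf : pFst M' q.2 = q.1 := hPM.fst_unique hmem (by simpa using hqM)
            rw [hpf] at hq'
            apply hqnotM'
            simpa using hq'
          · intro p hp q hq hpq
            have hp' : p ∈ M := (Finset.mem_sdiff.mp (Finset.mem_filter.mp (Finset.mem_coe.mp hp)).1).1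
            have hq' : q ∈ M := (Finset.mem_sdiff.mp (Finset.mem_filter.mp (Finset.mem_coe.mp hq)).1).1
            simp only [Prod.mk.injEq] at hpq
            exact hPM.mem_unique' hp' hq' hpq.2
        have hCC' : C.card < C'.card := by
          apply Finset.card_lt_card
          have hsub : C ⊆ C' := by
            rw [hCdef, hC'def]
            intro p hp
            obtain ⟨hp1, hp2⟩ := Finset.mem_filter.mp hp
            exact Finset.mem_filter.mpr ⟨hp1, le_of_lt hp2⟩
          refine (Finset.ssubset_iff_of_subset hsub).mpr
            ⟨ps, Finset.mem_filter.mpr ⟨hpsN, le_refl _⟩, fun hmem => ?_⟩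
          exact absurd (Finset.mem_filter.mp hmem).2 (lt_irrefl _)
        omega
      obtain ⟨p, hpN', hwp, hpi⟩ := key
      refine ⟨p, hpN', ?_⟩
      have hp1 : p.1 ≠ n + 1 := by omega
      have hp2 : p.1 ≤ p.2 := by omega
      unfold eExp
      rw [if_neg hp1, if_pos hp2]
      omega
    · -- ps.2 < v : (ps.1, v) is the witness
      refine ⟨(ps.1, v), hvN', ?_⟩
      have h1 : ps.1 ≠ n + 1 := by omega
      have h2 : ps.1 ≤ v := by omega
      unfold eExp
      rw [if_neg (by simpa using h1), if_pos (by simpa using h2)]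
      simp only
      omega
  -- conclusion
  obtain ⟨phat, hphatN', hphat⟩ := hwitness
  have hsum1 : ∑ p ∈ M ∩ M', extHeight n c p + ∑ p ∈ N, extHeight n c p
      = ∑ p ∈ M, extHeight n c p := Finset.sum_inter_add_sum_sdiff M M' _
  have hsum2 : ∑ p ∈ M' ∩ M, extHeight n c p + ∑ p ∈ N', extHeight n c p
      = ∑ p ∈ M', extHeight n c p := Finset.sum_inter_add_sum_sdiff M' M _
  rw [Finset.inter_comm] at hsum2
  have hNle : ∑ p ∈ N, extHeight n c p ≤ (N.card : ℝ) * c ^ D := by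
    rw [← nsmul_eq_mul]
    apply Finset.sum_le_card_nsmul
    intro p hp
    rw [extHeight_eq_pow]
    exact pow_le_pow_right₀ hc1 (hNbound p hp)
  have hNcard : (N.card : ℝ) ≤ (n : ℝ) + 1 := by
    have h1 : N.card ≤ M.card := Finset.card_le_card Finset.sdiff_subset
    have h2 : M.card = I.card := hPM.card_eq
    have h3 : I.card ≤ (Finset.Icc 1 (n + 1)).card := Finset.card_le_card hI
    have h4 : (Finset.Icc 1 (n + 1)).card = n + 1 := by rw [Nat.card_Icc]; omega
    have h5 : N.card ≤ n + 1 := by omega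
    exact_mod_cast h5
  have hN'ge : c ^ (D + 1) ≤ ∑ p ∈ N', extHeight n c p := by
    have h0 : ∀ p ∈ N', 0 ≤ extHeight n c p := by
      intro p hp
      rw [extHeight_eq_pow]
      positivity
    calc c ^ (D + 1) ≤ c ^ eExp n phat := pow_le_pow_right₀ hc1 hphat
      _ = extHeight n c phat := (extHeight_eq_pow _ _ _).symm
      _ ≤ ∑ p ∈ N', extHeight n c p := Finset.single_le_sum h0 hphatN'
  have hpow : (0 : ℝ) < c ^ D := by positivity
  have hstep : (N.card : ℝ) * c ^ D < c ^ (D + 1) := by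
    rw [pow_succ]
    calc (N.card : ℝ) * c ^ D ≤ ((n : ℝ) + 1) * c ^ D := by nlinarith
      _ < c * c ^ D := by nlinarith
      _ = c ^ D * c := mul_comm _ _
  linarith

/- ### Shift lemmas -/

lemma cycShiftExt_mem {n : ℕ} (hn : 0 < n) (t a : ℕ) (h1 : 1 ≤ a) (h2 : a ≤ n) :
    1 ≤ cycShiftExt n t a ∧ cycShiftExt n t a ≤ n := by
  unfold cycShiftExt
  rw [if_neg (by omega)]
  have := Nat.mod_lt (a - 1 + t) hn
  omega

lemma cycShiftExt_inv {n : ℕ} (hn : 0 < n) {s t : ℕ} (hst : s + t = n) (a : ℕ)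
    (h1 : 1 ≤ a) (h2 : a ≤ n + 1) :
    cycShiftExt n t (cycShiftExt n s a) = a := by
  by_cases ha : a = n + 1
  · simp [cycShiftExt, ha]
  · have h2' : a ≤ n := by omega
    have hmem := cycShiftExt_mem hn s a h1 h2'
    have hinner : cycShiftExt n s a = (a - 1 + s) % n + 1 := by
      unfold cycShiftExt
      rw [if_neg (by omega)]
    rw [hinner]
    unfold cycShiftExt
    rw [if_neg (by rw [hinner] at hmem; omega)]
    have e1 : (a - 1 + s) % n + 1 - 1 = (a - 1 + s) % n := by omega
    rw [e1, Nat.mod_add_mod]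
    have e2 : a - 1 + s + t = (a - 1) + n := by omega
    rw [e2, Nat.add_mod_right, Nat.mod_eq_of_lt (by omega)]
    omega

lemma eExp_eq_mod {n : ℕ} (hn : 0 < n) (x y : ℕ) (hx1 : 1 ≤ x) (hx : x ≤ n)
    (hy1 : 1 ≤ y) (hy : y ≤ n) : eExp n (x, y) = (n + y - x) % n := by
  unfold eExp
  rw [if_neg (by simp only; omega)]
  by_cases h : x ≤ y
  · rw [if_pos (by simpa using h)]
    have e : n + y - x = n + (y - x) := by omega
    simp only
    rw [e, Nat.add_mod_left, Nat.mod_eq_of_lt (by omega)]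
  · rw [if_neg (by simpa using h)]
    simp only
    rw [Nat.mod_eq_of_lt (by omega)]

lemma eExp_shift {n : ℕ} (hn : 0 < n) (t a b : ℕ) (ha1 : 1 ≤ a) (ha : a ≤ n + 1)
    (hb1 : 1 ≤ b) (hb : b ≤ n) :
    eExp n (cycShiftExt n t a, cycShiftExt n t b) = eExp n (a, b) := by
  by_cases hA : a = n + 1
  · have h1 : cycShiftExt n t a = n + 1 := by simp [cycShiftExt, hA]
    rw [h1, hA]
    simp [eExp]
  · have ha' : a ≤ n := by omega
    have hma := cycShiftExt_mem hn t a ha1 ha'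
    have hmb := cycShiftExt_mem hn t b hb1 hb
    rw [eExp_eq_mod hn _ _ hma.1 hma.2 hmb.1 hmb.2, eExp_eq_mod hn a b ha1 ha' hb1 hb]
    have hea : cycShiftExt n t a = (a - 1 + t) % n + 1 := by
      unfold cycShiftExt; rw [if_neg (by omega)]
    have heb : cycShiftExt n t b = (b - 1 + t) % n + 1 := by
      unfold cycShiftExt; rw [if_neg (by omega)]
    rw [hea, heb]
    have hu : (a - 1 + t) % n < n := Nat.mod_lt _ hn
    have hv : (b - 1 + t) % n < n := Nat.mod_lt _ hn
    have e1 : n + ((b - 1 + t) % n + 1) - ((a - 1 + t) % n + 1)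
        = n + (b - 1 + t) % n - (a - 1 + t) % n := by omega
    rw [e1]
    have key : (n + (b - 1 + t) % n - (a - 1 + t) % n) + (a - 1 + t)
        ≡ (n + b - a) + (a - 1 + t) [MOD n] := by
      calc (n + (b - 1 + t) % n - (a - 1 + t) % n) + (a - 1 + t)
          ≡ (n + (b - 1 + t) % n - (a - 1 + t) % n) + (a - 1 + t) % n [MOD n] :=
            Nat.ModEq.add_left _ (Nat.mod_modEq _ _).symm
        _ = n + (b - 1 + t) % n := by omega
        _ ≡ n + (b - 1 + t) [MOD n] := Nat.ModEq.add_left _ (Nat.mod_modEq _ _)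
        _ = (n + b - a) + (a - 1 + t) := by omega
    exact Nat.ModEq.add_right_cancel' _ key

lemma extHeight_shift {n : ℕ} (hn : 0 < n) (c : ℝ) (t a b : ℕ) (ha1 : 1 ≤ a)
    (ha : a ≤ n + 1) (hb1 : 1 ≤ b) (hb : b ≤ n) :
    extHeight n c (cycShiftExt n t a, cycShiftExt n t b) = extHeight n c (a, b) := by
  rw [extHeight_eq_pow, extHeight_eq_pow, eExp_shift hn t a b ha1 ha hb1 hb]

lemma isPM_image (f : ℕ → ℕ) {I J : Finset ℕ} {M : Finset (ℕ × ℕ)}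
    (h : IsPM I J M)
    (hfI : ∀ a ∈ I, ∀ b ∈ I, f a = f b → a = b)
    (hfJ : ∀ a ∈ J, ∀ b ∈ J, f a = f b → a = b) :
    IsPM (I.image f) (J.image f) (M.image (fun p => (f p.1, f p.2))) := by
  refine ⟨?_, ?_, ?_⟩
  · intro p hp
    simp only [Finset.mem_image] at hp
    obtain ⟨q, hq, rfl⟩ := hp
    exact ⟨Finset.mem_image_of_mem f (h.1 q hq).1, Finset.mem_image_of_mem f (h.1 q hq).2⟩
  · intro i hi
    simp only [Finset.mem_image] at hi
    obtain ⟨a, ha, rfl⟩ := hi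
    obtain ⟨b, hb, hbu⟩ := h.2.1 a ha
    refine ⟨f b, Finset.mem_image_of_mem _ hb, ?_⟩
    intro y hy
    simp only [Finset.mem_image] at hy
    obtain ⟨q, hq, hqe⟩ := hy
    simp only [Prod.mk.injEq] at hqe
    have h2 : q.1 = a := hfI _ (h.1 q hq).1 _ ha hqe.1
    have h3 : q.2 = b := hbu q.2 (by rw [← h2]; simpa using hq)
    rw [← hqe.2, h3]
  · intro j hj
    simp only [Finset.mem_image] at hj
    obtain ⟨b, hb, rfl⟩ := hj
    obtain ⟨a, ha, hau⟩ := h.2.2 b hb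
    refine ⟨f a, Finset.mem_image_of_mem _ ha, ?_⟩
    intro y hy
    simp only [Finset.mem_image] at hy
    obtain ⟨q, hq, hqe⟩ := hy
    simp only [Prod.mk.injEq] at hqe
    have h2 : q.2 = b := hfJ _ (h.1 q hq).2 _ hb hqe.2
    have h3 : q.1 = a := hau q.1 (by rw [← h2]; simpa using hq)
    rw [← hqe.1, h3]

end Dyck16Aux

open Dyck16Aux in
/-- For `c` large enough, the heights `extHeight` select, among all perfect matchings
between `I ⊆ [n+1]` and `J ⊆ [n]`, precisely the matching of `ℳ^ext_n` as the one of
strictly minimal total height. (Hence they induce the extended Dyck path triangulation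
as a regular triangulation.) -/
theorem dyckpaths_stmt16 (n : ℕ) (hn : 0 < n) :
    ∃ c₀ : ℝ, 1 < c₀ ∧ ∀ c : ℝ, c₀ ≤ c →
      ∀ I J : Finset ℕ, I ⊆ Finset.Icc 1 (n + 1) → J ⊆ Finset.Icc 1 n →
        I.card = J.card →
        ∀ M : Finset (ℕ × ℕ), IsPM I J M → MemDyckFamilyExt n M →
          ∀ M' : Finset (ℕ × ℕ), IsPM I J M' → M' ≠ M →
            ∑ p ∈ M, extHeight n c p < ∑ p ∈ M', extHeight n c p := by
  refine ⟨(n : ℝ) + 2, by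
    have : (0 : ℝ) ≤ n := Nat.cast_nonneg n
    linarith, ?_⟩
  intro c hc I J hI hJ hcardIJ M hPM hfam M' hPM' hne
  obtain ⟨ℓ, hℓ, M₀, hcoord, hPM₀, ⟨hnc₀, hwi₀⟩, hMeq⟩ := hfam
  set σ : ℕ → ℕ := cycShiftExt n ℓ with hσdef
  set τ : ℕ → ℕ := cycShiftExt n (n - ℓ) with hτdef
  have hℓn : ℓ + (n - ℓ) = n := by omega
  have hnℓ : (n - ℓ) + ℓ = n := by omega
  have hτσ : ∀ a, 1 ≤ a → a ≤ n + 1 → τ (σ a) = a := fun a h1 h2 =>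
    cycShiftExt_inv hn hℓn a h1 h2
  have hστ : ∀ a, 1 ≤ a → a ≤ n + 1 → σ (τ a) = a := fun a h1 h2 =>
    cycShiftExt_inv hn hnℓ a h1 h2
  set I₀ := M₀.image Prod.fst with hI₀def
  set J₀ := M₀.image Prod.snd with hJ₀def
  have hI₀sub : I₀ ⊆ Finset.Icc 1 (n + 1) := by
    intro a ha
    rw [hI₀def] at ha
    simp only [Finset.mem_image] at ha
    obtain ⟨p, hp, rfl⟩ := ha
    exact (hcoord p hp).1
  have hJ₀sub : J₀ ⊆ Finset.Icc 1 n := by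
    intro a ha
    rw [hJ₀def] at ha
    simp only [Finset.mem_image] at ha
    obtain ⟨p, hp, rfl⟩ := ha
    exact (hcoord p hp).2
  have hM₀co : ∀ p ∈ M₀, 1 ≤ p.1 ∧ p.1 ≤ n + 1 ∧ 1 ≤ p.2 ∧ p.2 ≤ n := by
    intro p hp
    have h1 := hcoord p hp
    simp only [Finset.mem_Icc] at h1
    exact ⟨h1.1.1, h1.1.2, h1.2.1, h1.2.2⟩
  have hM'co : ∀ p ∈ M', 1 ≤ p.1 ∧ p.1 ≤ n + 1 ∧ 1 ≤ p.2 ∧ p.2 ≤ n := by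
    intro p hp
    have h1 := hI (hPM'.1 p hp).1
    have h2 := hJ (hPM'.1 p hp).2
    simp only [Finset.mem_Icc] at h1 h2
    exact ⟨h1.1, h1.2, h2.1, h2.2⟩
  have hIeq : I = I₀.image σ := by
    rw [← hPM.image_fst, hMeq, Finset.image_image, hI₀def, Finset.image_image]
    rfl
  have hJeq : J = J₀.image σ := by
    rw [← hPM.image_snd, hMeq, Finset.image_image, hJ₀def, Finset.image_image]
    rfl
  set g : ℕ × ℕ → ℕ × ℕ := fun p => (σ p.1, σ p.2) with hgdef
  set g' : ℕ × ℕ → ℕ × ℕ := fun p => (τ p.1, τ p.2) with hg'def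
  set M'' := M'.image g' with hM''def
  have hτI : ∀ a ∈ I, ∀ b ∈ I, τ a = τ b → a = b := by
    intro a ha b hb hab
    have h1 := hI ha
    have h2 := hI hb
    simp only [Finset.mem_Icc] at h1 h2
    rw [← hστ a h1.1 h1.2, ← hστ b h2.1 h2.2, hab]
  have hτJ : ∀ a ∈ J, ∀ b ∈ J, τ a = τ b → a = b := by
    intro a ha b hb hab
    have h1 := hJ ha
    have h2 := hJ hb
    simp only [Finset.mem_Icc] at h1 h2
    rw [← hστ a h1.1 (by omega), ← hστ b h2.1 (by omega), hab]
  have hIτ : I.image τ = I₀ := by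
    rw [hIeq, Finset.image_image]
    have heq : ∀ a ∈ I₀, (τ ∘ σ) a = a := by
      intro a ha
      have h1 := hI₀sub ha
      simp only [Finset.mem_Icc] at h1
      exact hτσ a h1.1 h1.2
    calc I₀.image (τ ∘ σ) = I₀.image id := Finset.image_congr heq
      _ = I₀ := Finset.image_id
  have hJτ : J.image τ = J₀ := by
    rw [hJeq, Finset.image_image]
    have heq : ∀ a ∈ J₀, (τ ∘ σ) a = a := by
      intro a ha
      have h1 := hJ₀sub ha
      simp only [Finset.mem_Icc] at h1
      exact hτσ a h1.1 (by omega)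
    calc J₀.image (τ ∘ σ) = J₀.image id := Finset.image_congr heq
      _ = J₀ := Finset.image_id
  have hPM'' : IsPM I₀ J₀ M'' := by
    have h := isPM_image τ hPM' hτI hτJ
    rwa [hIτ, hJτ] at h
  have hM''ne : M'' ≠ M₀ := by
    intro heq
    apply hne
    have h1 : M''.image g = M' := by
      rw [hM''def, Finset.image_image]
      have heqon : ∀ p ∈ M', (g ∘ g') p = p := by
        intro p hp
        have hco := hM'co p hp
        simp only [hgdef, hg'def, Function.comp_apply]
        rw [hστ p.1 hco.1 hco.2.1, hστ p.2 hco.2.2.1 (by omega)]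
      calc M'.image (g ∘ g') = M'.image id := Finset.image_congr heqon
        _ = M' := Finset.image_id
    rw [heq] at h1
    rw [← h1, hMeq]
  have hginj : ∀ p ∈ M₀, ∀ q ∈ M₀, g p = g q → p = q := by
    intro p hp q hq hpq
    have hcp := hM₀co p hp
    have hcq := hM₀co q hq
    simp only [hgdef, Prod.mk.injEq] at hpq
    have e1 : p.1 = q.1 := by
      rw [← hτσ p.1 hcp.1 hcp.2.1, ← hτσ q.1 hcq.1 hcq.2.1, hpq.1]
    have e2 : p.2 = q.2 := by
      rw [← hτσ p.2 hcp.2.2.1 (by omega), ← hτσ q.2 hcq.2.2.1 (by omega), hpq.2]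
    exact Prod.ext e1 e2
  have hg'inj : ∀ p ∈ M', ∀ q ∈ M', g' p = g' q → p = q := by
    intro p hp q hq hpq
    have hcp := hM'co p hp
    have hcq := hM'co q hq
    simp only [hg'def, Prod.mk.injEq] at hpq
    have e1 : p.1 = q.1 := by
      rw [← hστ p.1 hcp.1 hcp.2.1, ← hστ q.1 hcq.1 hcq.2.1, hpq.1]
    have e2 : p.2 = q.2 := by
      rw [← hστ p.2 hcp.2.2.1 (by omega), ← hστ q.2 hcq.2.2.1 (by omega), hpq.2]
    exact Prod.ext e1 e2
  have hsumM : ∑ p ∈ M, extHeight n c p = ∑ p ∈ M₀, extHeight n c p := by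
    rw [hMeq, Finset.sum_image hginj]
    apply Finset.sum_congr rfl
    intro p hp
    have hcp := hM₀co p hp
    exact extHeight_shift hn c ℓ p.1 p.2 hcp.1 hcp.2.1 hcp.2.2.1 hcp.2.2.2
  have hsumM' : ∑ p ∈ M', extHeight n c p = ∑ p ∈ M'', extHeight n c p := by
    rw [hM''def, Finset.sum_image hg'inj]
    apply Finset.sum_congr rfl
    intro p hp
    have hcp := hM'co p hp
    exact (extHeight_shift hn c (n - ℓ) p.1 p.2 hcp.1 hcp.2.1 hcp.2.2.1 hcp.2.2.2).symm
  rw [hsumM, hsumM']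
  exact core n hn c hc I₀ J₀ hI₀sub hJ₀sub M₀ M'' hPM₀ hPM'' hnc₀ hwi₀ hM''ne
end

section
/- For every integer n ≥ 2, there is no matching ensemble ℳ on the induced subgraphs of the complete bipartite graph K_{[n+1],[n]} with the following two properties: (i) the cyclic matching M_cyc = {(1,2), (2,3), …, (n−1,n), (n,1)} between [n] and [n] belongs to ℳ; and (ii) for every w ∈ [n], the unique perfect matching of ℳ between ([n] ∖ {w}) ∪ {n+1} and [n] belongs to ℳ^ext_n. (In particular, the flipped extended Dyck path triangulation of the boundary complex is non-extendable.) -/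
/-- `F` is a matching ensemble on the induced subgraphs of `K_{[m],[n]}`: its members
are perfect matchings inside `[m] × [n]`, and it satisfies the supports axiom (SA),
the closure axiom (CA) and the linkage axiom (LA). -/
def IsMatchingEnsemble (m n : ℕ) (F : Finset (ℕ × ℕ) → Prop) : Prop :=
  (∀ M, F M → (∀ p ∈ M, p.1 ∈ Finset.Icc 1 m ∧ p.2 ∈ Finset.Icc 1 n) ∧
      IsPM (M.image Prod.fst) (M.image Prod.snd) M) ∧
  (∀ I, I ⊆ Finset.Icc 1 m → ∀ J, J ⊆ Finset.Icc 1 n → I.card = J.card →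
      ∃! M : Finset (ℕ × ℕ), IsPM I J M ∧ F M) ∧
  (∀ M, F M → ∀ M' ⊆ M, F M') ∧
  (∀ M, F M →
    (∀ w ∈ Finset.Icc 1 m \ M.image Prod.fst, ∃ p ∈ M,
        F (insert (w, p.2) (M.erase p))) ∧
    (∀ v ∈ Finset.Icc 1 n \ M.image Prod.snd, ∃ p ∈ M,
        F (insert (p.1, v) (M.erase p))))

lemma shift_eq {n l a : ℕ} (ha : a ≤ n) : cycShiftExt n l a = (a - 1 + l) % n + 1 := by
  unfold cycShiftExt; rw [if_neg (by omega)]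

lemma shift_top {n l : ℕ} : cycShiftExt n l (n + 1) = n + 1 := by
  unfold cycShiftExt; rw [if_pos rfl]

lemma shift_bounds {n l a : ℕ} (hn : 0 < n) (ha : a ≤ n) :
    1 ≤ cycShiftExt n l a ∧ cycShiftExt n l a ≤ n := by
  rw [shift_eq ha]
  have := Nat.mod_lt (a - 1 + l) hn
  omega

lemma shift_inj {n l a b : ℕ} (hn : 0 < n) (ha1 : 1 ≤ a) (ha2 : a ≤ n) (hb1 : 1 ≤ b)
    (hb2 : b ≤ n) (h : cycShiftExt n l a = cycShiftExt n l b) : a = b := by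
  rw [shift_eq ha2, shift_eq hb2] at h
  have h2 : (a - 1 + l) % n = (b - 1 + l) % n := by omega
  have h3 : a - 1 ≡ b - 1 [MOD n] := Nat.ModEq.add_right_cancel' l h2
  unfold Nat.ModEq at h3
  rw [Nat.mod_eq_of_lt (by omega : a - 1 < n), Nat.mod_eq_of_lt (by omega : b - 1 < n)] at h3
  omega

lemma shift_succ {n l a b : ℕ} (hn : 0 < n) (ha1 : 1 ≤ a) (ha2 : a ≤ n) (hb1 : 1 ≤ b)
    (hb2 : b ≤ n) (h : cycShiftExt n l b = cycShiftExt n l a % n + 1) : b = a % n + 1 := by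
  rw [shift_eq ha2, shift_eq hb2] at h
  have e1 : ((a - 1 + l) % n + 1) % n = (a - 1 + l + 1) % n := Nat.mod_add_mod _ _ _
  have e2 : a - 1 + l + 1 = a + l := by omega
  rw [e2] at e1
  have h2 : (b - 1) + l ≡ a + l [MOD n] := by
    unfold Nat.ModEq
    omega
  have h3 : b - 1 ≡ a [MOD n] := Nat.ModEq.add_right_cancel' l h2
  unfold Nat.ModEq at h3
  rw [Nat.mod_eq_of_lt (by omega : b - 1 < n)] at h3
  omega

lemma mod_succ_inj {n a b : ℕ} (hn : 0 < n) (ha1 : 1 ≤ a) (ha2 : a ≤ n) (hb1 : 1 ≤ b)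
    (hb2 : b ≤ n) (h : a % n + 1 = b % n + 1) : a = b := by
  have h2 : a % n = b % n := by omega
  rcases eq_or_lt_of_le ha2 with rfl | ha
  · rw [Nat.mod_self] at h2
    rcases eq_or_lt_of_le hb2 with rfl | hb
    · rfl
    · rw [Nat.mod_eq_of_lt hb] at h2; omega
  · rw [Nat.mod_eq_of_lt ha] at h2
    rcases eq_or_lt_of_le hb2 with rfl | hb
    · rw [Nat.mod_self] at h2; omega
    · rw [Nat.mod_eq_of_lt hb] at h2; omega

/-- There is no matching ensemble on `K_{[n+1],[n]}` containing the cyclic matching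
`{(1,2), (2,3), …, (n-1,n), (n,1)}` and whose unique matchings between
`([n] ∖ {w}) ∪ {n+1}` and `[n]` all belong to `ℳ^ext_n`. (Hence the flipped extended
Dyck path triangulation of the boundary complex is non-extendable.) -/
theorem dyckpaths_stmt17 (n : ℕ) (hn : 2 ≤ n) :
    ¬ ∃ F : Finset (ℕ × ℕ) → Prop,
        IsMatchingEnsemble (n + 1) n F ∧
        F ((Finset.Icc 1 n).image (fun i => (i, i % n + 1))) ∧
        (∀ w ∈ Finset.Icc 1 n, ∀ M : Finset (ℕ × ℕ),
          IsPM (insert (n + 1) ((Finset.Icc 1 n).erase w)) (Finset.Icc 1 n) M →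
          F M → MemDyckFamilyExt n M) := by
  rintro ⟨F, ⟨hPM, hSA, hCA, hLA⟩, hcyc, hext⟩
  have hn0 : 0 < n := by omega
  set Mcyc : Finset (ℕ × ℕ) := (Finset.Icc 1 n).image (fun i => (i, i % n + 1)) with hMcyc
  have hginj : Function.Injective (fun i : ℕ => (i, i % n + 1)) :=
    fun a b h => congrArg Prod.fst h
  have hfst : Mcyc.image Prod.fst = Finset.Icc 1 n := by
    rw [hMcyc, Finset.image_image]
    exact Finset.image_id'
  obtain ⟨p, hpmem, hF'⟩ := (hLA Mcyc hcyc).1 (n + 1) (by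
    rw [Finset.mem_sdiff, hfst, Finset.mem_Icc, Finset.mem_Icc]
    omega)
  rw [hMcyc, Finset.mem_image] at hpmem
  obtain ⟨i, hi, hp⟩ := hpmem
  simp only [Finset.mem_Icc] at hi
  subst hp
  set M' : Finset (ℕ × ℕ) := insert (n + 1, i % n + 1) (Mcyc.erase (i, i % n + 1)) with hM'
  -- membership characterization of M'
  have hM'mem : ∀ q ∈ M', q = (n + 1, i % n + 1) ∨
      (∃ j, 1 ≤ j ∧ j ≤ n ∧ j ≠ i ∧ q = (j, j % n + 1)) := by
    intro q hq
    rw [hM', Finset.mem_insert] at hq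
    rcases hq with rfl | hq
    · exact Or.inl rfl
    · right
      rw [Finset.mem_erase, hMcyc, Finset.mem_image] at hq
      obtain ⟨hne, j, hj, hgj⟩ := hq
      simp only [Finset.mem_Icc] at hj
      exact ⟨j, hj.1, hj.2, fun h => hne (by rw [← hgj, h]), hgj.symm⟩
  have hsp : (n + 1, i % n + 1) ∈ M' := Finset.mem_insert_self _ _
  -- cardinality of M'
  have hcardcyc : Mcyc.card = n := by
    rw [hMcyc, Finset.card_image_of_injective _ hginj, Nat.card_Icc]
    omega
  have hgiMcyc : (i, i % n + 1) ∈ Mcyc := by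
    rw [hMcyc]
    exact Finset.mem_image_of_mem _ (Finset.mem_Icc.mpr hi)
  have hnotin : (n + 1, i % n + 1) ∉ Mcyc.erase (i, i % n + 1) := by
    intro h
    have h2 := Finset.mem_of_mem_erase h
    rw [hMcyc, Finset.mem_image] at h2
    obtain ⟨j, hj, hgj⟩ := h2
    simp only [Finset.mem_Icc] at hj
    have : j = n + 1 := congrArg Prod.fst hgj
    omega
  have hcardM' : M'.card = n := by
    rw [hM', Finset.card_insert_of_notMem hnotin, Finset.card_erase_of_mem hgiMcyc, hcardcyc]
    omega
  -- supports of M'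
  have herase : Mcyc.erase (i, i % n + 1) = ((Finset.Icc 1 n).erase i).image
      (fun i : ℕ => (i, i % n + 1)) := by
    rw [Finset.image_erase hginj, hMcyc]
  have himfst : M'.image Prod.fst = insert (n + 1) ((Finset.Icc 1 n).erase i) := by
    rw [hM', Finset.image_insert, herase, Finset.image_image]
    congr 1
    exact Finset.image_id'
  have hIccim : (Finset.Icc 1 n).image (fun a => a % n + 1) = Finset.Icc 1 n := by
    apply Finset.eq_of_subset_of_card_le
    · intro x hx
      rw [Finset.mem_image] at hx
      obtain ⟨a, ha, rfl⟩ := hx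
      simp only [Finset.mem_Icc] at ha ⊢
      have := Nat.mod_lt a hn0
      omega
    · rw [Finset.card_image_of_injOn (fun a ha b hb h => by
        simp only [Finset.coe_Icc, Set.mem_Icc] at ha hb
        exact mod_succ_inj hn0 ha.1 ha.2 hb.1 hb.2 h)]
  have himsnd : M'.image Prod.snd = Finset.Icc 1 n := by
    rw [hM', Finset.image_insert, herase, Finset.image_image]
    have e : (Prod.snd ∘ fun i : ℕ => (i, i % n + 1)) = fun a => a % n + 1 := rfl
    rw [e]
    have e2 : (n + 1, i % n + 1).2 = (fun a => a % n + 1) i := rfl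
    rw [e2, ← Finset.image_insert (fun a => a % n + 1) i ((Finset.Icc 1 n).erase i),
      Finset.insert_erase (Finset.mem_Icc.mpr hi), hIccim]
  -- M' is in the Dyck family
  have hpm' := (hPM M' hF').2
  rw [himfst, himsnd] at hpm'
  obtain ⟨l, hl, M₀, hbound, ⟨hpmE, hpmL, hpmR⟩, ⟨hNC, hWI⟩, hMeq⟩ :=
    hext i (Finset.mem_Icc.mpr hi) M' hpm' hF'
  -- every edge of M₀ maps into M'
  have hmapsto : ∀ p ∈ M₀, (cycShiftExt n l p.1, cycShiftExt n l p.2) ∈ M' := by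
    intro p hp
    rw [hMeq]
    exact Finset.mem_image_of_mem _ hp
  have hbnd : ∀ p ∈ M₀, (1 ≤ p.1 ∧ p.1 ≤ n + 1) ∧ (1 ≤ p.2 ∧ p.2 ≤ n) := by
    intro p hp
    have := hbound p hp
    simp only [Finset.mem_Icc] at this
    exact this
  -- characterize non-(n+1) edges of M₀
  have hchar : ∀ p ∈ M₀, p.1 ≠ n + 1 → 1 ≤ p.1 ∧ p.1 ≤ n - 1 ∧ p.2 = p.1 + 1 := by
    intro p hp hne
    obtain ⟨⟨h11, h12⟩, h21, h22⟩ := hbnd p hp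
    have h1n : p.1 ≤ n := by omega
    rcases hM'mem _ (hmapsto p hp) with heq | ⟨j, hj1, hj2, hji, heq⟩
    · exfalso
      have e1 : cycShiftExt n l p.1 = n + 1 := congrArg Prod.fst heq
      have := (shift_bounds (l := l) hn0 h1n).2
      omega
    · have e1 : cycShiftExt n l p.1 = j := congrArg Prod.fst heq
      have e2 : cycShiftExt n l p.2 = j % n + 1 := congrArg Prod.snd heq
      rw [← e1] at e2
      have hsucc : p.2 = p.1 % n + 1 := shift_succ hn0 h11 h1n h21 h22 e2
      have hwi := hWI p hp hne
      rcases eq_or_lt_of_le h1n with h | h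
      · rw [h, Nat.mod_self] at hsucc
        omega
      · rw [Nat.mod_eq_of_lt h] at hsucc
        omega
  -- first coordinates are distinct in M₀
  have hfstinj : ∀ p ∈ M₀, ∀ q ∈ M₀, p.1 = q.1 → p = q := by
    intro p hp q hq h
    obtain ⟨j, hj, huniq⟩ := hpmL p.1 (Finset.mem_image_of_mem _ hp)
    have e1 : p.2 = j := huniq p.2 hp
    have e2 : q.2 = j := huniq q.2 (by rw [h]; exact hq)
    obtain ⟨p1, p2⟩ := p
    obtain ⟨q1, q2⟩ := q
    simp only at h e1 e2
    rw [Prod.mk.injEq]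
    omega
  -- the special edge of M₀
  have hspecial : ∃ q ∈ M₀, q.1 = n + 1 := by
    have hmem : (n + 1, i % n + 1) ∈ M₀.image
        (fun p => (cycShiftExt n l p.1, cycShiftExt n l p.2)) := by
      rw [← hMeq]
      exact hsp
    rw [Finset.mem_image] at hmem
    obtain ⟨q, hq, heq⟩ := hmem
    refine ⟨q, hq, ?_⟩
    by_contra hne
    have e1 : cycShiftExt n l q.1 = n + 1 := congrArg Prod.fst heq
    have hb := hbnd q hq
    have := (shift_bounds (l := l) hn0 (show q.1 ≤ n by omega)).2
    omega
  obtain ⟨q, hqM, hq1⟩ := hspecial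
  -- cardinality of M₀
  have hinjOn : Set.InjOn (fun p : ℕ × ℕ => (cycShiftExt n l p.1, cycShiftExt n l p.2)) M₀ := by
    intro p hp q hq h
    have hp' : p ∈ M₀ := hp
    have hq' : q ∈ M₀ := hq
    have hbp := hbnd p hp'
    have hbq := hbnd q hq'
    have e1 : cycShiftExt n l p.1 = cycShiftExt n l q.1 := congrArg Prod.fst h
    have e2 : cycShiftExt n l p.2 = cycShiftExt n l q.2 := congrArg Prod.snd h
    have h2 : p.2 = q.2 := shift_inj hn0 hbp.2.1 hbp.2.2 hbq.2.1 hbq.2.2 e2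
    have h1 : p.1 = q.1 := by
      by_cases hp1 : p.1 = n + 1
      · by_cases hq1' : q.1 = n + 1
        · rw [hp1, hq1']
        · exfalso
          rw [hp1, shift_top] at e1
          have := (shift_bounds (l := l) hn0 (show q.1 ≤ n by omega)).2
          omega
      · by_cases hq1' : q.1 = n + 1
        · exfalso
          rw [hq1', shift_top] at e1
          have := (shift_bounds (l := l) hn0 (show p.1 ≤ n by omega)).2
          omega
        · exact shift_inj hn0 hbp.1.1 (by omega) hbq.1.1 (by omega) e1
    obtain ⟨p1, p2⟩ := p
    obtain ⟨q1, q2⟩ := q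
    simp only at h1 h2
    rw [Prod.mk.injEq]
    exact ⟨h1, h2⟩
  have hcard0 : M₀.card = n := by
    have hc := Finset.card_image_of_injOn hinjOn
    rw [← hMeq] at hc
    omega
  -- the non-special edges have first coordinates exactly [1, n-1]
  have hSne : ∀ p ∈ M₀.erase q, p.1 ≠ n + 1 := by
    intro p hp h
    exact (Finset.ne_of_mem_erase hp)
      (hfstinj p (Finset.mem_of_mem_erase hp) q hqM (by rw [h, hq1]))
  have hT : (M₀.erase q).image Prod.fst = Finset.Icc 1 (n - 1) := by
    apply Finset.eq_of_subset_of_card_le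
    · intro x hx
      rw [Finset.mem_image] at hx
      obtain ⟨p, hp, rfl⟩ := hx
      have := hchar p (Finset.mem_of_mem_erase hp) (hSne p hp)
      simp only [Finset.mem_Icc]
      omega
    · rw [Finset.card_image_of_injOn (fun p hp p' hp' h =>
        hfstinj p (Finset.mem_of_mem_erase hp) p' (Finset.mem_of_mem_erase hp') h),
        Finset.card_erase_of_mem hqM, hcard0, Nat.card_Icc]
      omega
  -- the edge (1,2) is in M₀
  have h1T : (1 : ℕ) ∈ (M₀.erase q).image Prod.fst := by
    rw [hT, Finset.mem_Icc]
    omega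
  obtain ⟨p, hpS, hp1⟩ := Finset.mem_image.mp h1T
  have hpM := Finset.mem_of_mem_erase hpS
  have hpchar := hchar p hpM (hSne p hpS)
  -- noncrossing forces q.2 > 2
  have hq2 : 2 < q.2 := by
    have := hNC p hpM q hqM (by omega)
    omega
  -- but then (q.2 - 1, q.2) is also in M₀, contradicting uniqueness
  have hq2n : q.2 ≤ n := (hbnd q hqM).2.2
  have hr : (q.2 - 1) ∈ (M₀.erase q).image Prod.fst := by
    rw [hT, Finset.mem_Icc]
    omega
  obtain ⟨r, hrS, hr1⟩ := Finset.mem_image.mp hr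
  have hrM := Finset.mem_of_mem_erase hrS
  have hrchar := hchar r hrM (hSne r hrS)
  have hr2 : r.2 = q.2 := by omega
  obtain ⟨a, ha, hauniq⟩ := hpmR q.2 (Finset.mem_image_of_mem _ hqM)
  have e1 : r.1 = a := hauniq r.1 (by rw [← hr2]; exact hrM)
  have e2 : q.1 = a := hauniq q.1 hqM
  omega
end
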